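/- arXiv:1810.05750 — 2 statements merged into one kernel-verified Lean document; each statement's English description precedes it below -/
import Mathlib

section
/- Define coefficients b̃_{k,n} by Σ_λ q^{|λ|} t^{w̃t(λ)} = Σ_{k,n} b̃_{k,n} t^k q^n, where the sum is over all partitions λ and w̃t(λ) = |{□ ∈ λ : a(□) + 1 ≡ l(□) (mod 3)}|. Then b̃_{k,n} = 0 for all k > n/2. -/
/-- A partition, represented as its Young diagram: the weakly decreasing list of
(positive) row lengths, row `0` being the bottom (longest) row. -/
structure YDPartition where
  rows : List ℕ
  sorted : rows.Pairwise (· ≥ ·)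
  pos : ∀ x ∈ rows, 0 < x

namespace YDPartition

/-- The number of boxes of the diagram. -/
def size (p : YDPartition) : ℕ := p.rows.sum

/-- The length of row `i` (zero for rows above the diagram). -/
def row (p : YDPartition) (i : ℕ) : ℕ := p.rows.getD i 0

/-- The height `k` of the first column, i.e. the number of rows. -/
def colHeight (p : YDPartition) : ℕ := p.rows.length

/-- The length `j` of the first (bottom) row. -/
def rowLen (p : YDPartition) : ℕ := p.row 0

/-- The height of column `c` (columns indexed from `0`). -/
def colH (p : YDPartition) (c : ℕ) : ℕ :=
  ((Finset.range p.colHeight).filter (fun r => c < p.row r)).card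

/-- The arm of the box in row `r` and column `c`: the number of boxes strictly
above it in its column. -/
def arm (p : YDPartition) (r c : ℕ) : ℕ :=
  ((Finset.Ioo r p.colHeight).filter (fun r' => c < p.row r')).card

/-- The leg of the box in row `r` and column `c`: the number of boxes strictly
to its right in its row. -/
def leg (p : YDPartition) (r c : ℕ) : ℕ := p.row r - 1 - c

/-- The boxes of the diagram, as (row, column) pairs. -/
def cells (p : YDPartition) : Finset (ℕ × ℕ) :=
  (Finset.range p.colHeight ×ˢ Finset.range p.rowLen).filter (fun b => b.2 < p.row b.1)

/-- `w̃t(λ) = #{□ ∈ λ : a(□) + 1 ≡ l(□) (mod 3)}`. -/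
def wtt (p : YDPartition) : ℕ :=
  (p.cells.filter (fun b => (p.arm b.1 b.2 + 1) % 3 = p.leg b.1 b.2 % 3)).card

/-- `wt(λ) = #{□ ∈ λ : l(□) > 1 and a(□) + 1 ≡ l(□) (mod 3)}`. -/
def wt (p : YDPartition) : ℕ :=
  (p.cells.filter (fun b => 1 < p.leg b.1 b.2 ∧ (p.arm b.1 b.2 + 1) % 3 = p.leg b.1 b.2 % 3)).card

/-- A list of naturals is (the row list of) a well-defined Young diagram iff
it is weakly decreasing with positive entries. -/
def IsYD (l : List ℕ) : Prop := l.Pairwise (· ≥ ·) ∧ ∀ x ∈ l, 0 < x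

instance (l : List ℕ) : Decidable (IsYD l) := by unfold IsYD; exact inferInstance

/-- The empty partition. -/
def emptyP : YDPartition := ⟨[], List.Pairwise.nil, by simp⟩

/-- The row list of `ρ₁λ`: remove the first row (length `j`), add one box to it,
and insert the resulting `j + 1` boxes as a new first column. -/
def rho1Rows (p : YDPartition) : List ℕ :=
  (List.range (p.rowLen + 1)).map
    (fun i => p.rows.tail.getD i 0 + 1)

/-- The row list of `ψ₂λ`: remove the first column (height `k`), add two boxes
to it, and insert the resulting `k + 2` boxes as a new first row. -/
def psi2Rows (p : YDPartition) : List ℕ :=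
  (p.colHeight + 2) :: (p.rows.map (· - 1)).filter (fun x => decide (0 < x))

/-- `ρ₁`, as a partially defined map: defined exactly when the new first column
(height `j + 1`) is at least as high as the rest of the diagram (height `k - 1`),
i.e. when `j ≥ k - 2`. -/
def rho1? (p : YDPartition) : Option YDPartition :=
  if h : p.colHeight ≤ p.rowLen + 2 ∧ IsYD (rho1Rows p)
  then some ⟨rho1Rows p, h.2.1, h.2.2⟩ else none

/-- `ψ₂`, as a partially defined map: defined exactly when the result is a
well-defined Young diagram, i.e. when `j ≤ k + 3`. -/
def psi2? (p : YDPartition) : Option YDPartition :=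
  if h : IsYD (psi2Rows p) then some ⟨psi2Rows p, h.1, h.2⟩ else none

/-- Apply `ρ₁` (for `a = 1`) or `ψ₂` (for `a = 2`). -/
def step (a : ℕ) (p : YDPartition) : Option YDPartition :=
  if a = 1 then rho1? p else psi2? p

/-- Apply a `{1,2}`-word to the empty partition, the leftmost entry being the
first map applied. -/
def applyWord (w : List ℕ) : Option YDPartition :=
  w.foldlM (fun p a => step a p) emptyP

end YDPartition


namespace YDPartition

/-- Indicator count over `Ico`. -/
def Ic (a b m : ℕ) : ℕ := ∑ s ∈ Finset.Ico a b, if s % 3 = m % 3 then 1 else 0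

/-- Row diagonal count. -/
def Tc (p : YDPartition) (m : ℕ) : ℕ :=
  ∑ r ∈ Finset.range p.colHeight, if (p.row r + r) % 3 = m % 3 then 1 else 0

/-- Column diagonal count. -/
def Gc (p : YDPartition) (m : ℕ) : ℕ :=
  ∑ c ∈ Finset.range p.rowLen, if (p.colH c + c) % 3 = m % 3 then 1 else 0

lemma rowPos {p : YDPartition} {r : ℕ} : r < p.colHeight ↔ 0 < p.row r := by
  constructor
  · intro h
    have : p.rows.getD r 0 = p.rows[r]'h := List.getD_eq_getElem p.rows 0 h
    rw [row, this]
    exact p.pos _ (List.getElem_mem _)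
  · intro h
    by_contra hc
    push_neg at hc
    rw [row, List.getD_eq_default] at h
    · omega
    · exact hc

lemma row_le_head {p : YDPartition} (r : ℕ) : p.row r ≤ p.rowLen := by
  rcases hp : p.rows with _ | ⟨a, l⟩
  · simp [row, rowLen, hp]
  · have hs := p.sorted
    rw [hp] at hs
    rw [rowLen, row, row, hp]
    match r with
    | 0 => simp
    | r + 1 =>
      simp only [List.getD_cons_succ, List.getD_cons_zero]
      rcases Nat.lt_or_ge r l.length with h | h
      · have : l.getD r 0 = l[r]'h := List.getD_eq_getElem l 0 h
        rw [this]
        exact (List.pairwise_cons.mp hs).1 _ (List.getElem_mem _)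
      · rw [List.getD_eq_default _ _ h]; omega

lemma rowMono {p : YDPartition} {r r' : ℕ} (h : r ≤ r') : p.row r' ≤ p.row r := by
  rcases Nat.lt_or_ge r' p.rows.length with h' | h'
  · have hr : r < p.rows.length := lt_of_le_of_lt h h'
    rcases eq_or_lt_of_le h with rfl | hlt
    · exact le_refl _
    · have := List.pairwise_iff_getElem.mp p.sorted r r' hr h' hlt
      rw [row, row, List.getD_eq_getElem _ 0 h', List.getD_eq_getElem _ 0 hr]
      exact this
  · rw [row, List.getD_eq_default _ _ h']
    exact Nat.zero_le _

lemma colH_zero (p : YDPartition) : p.colH 0 = p.colHeight := by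
  rw [colH]
  rw [Finset.filter_true_of_mem, Finset.card_range]
  intro r hr
  exact rowPos.mp (Finset.mem_range.mp hr)

lemma colH_eq_zero {p : YDPartition} {c : ℕ} (h : p.rowLen ≤ c) : p.colH c = 0 := by
  rw [colH, Finset.card_eq_zero, Finset.filter_eq_empty_iff]
  intro r _
  have := row_le_head (p := p) r
  omega

lemma arm_eq {p : YDPartition} {r c : ℕ} (hr : r < p.colHeight) (hc : c < p.row r) :
    p.arm r c + r + 1 = p.colH c ∧ r < p.colH c := by
  have key : (Finset.range p.colHeight).filter (fun r' => c < p.row r') =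
      ((Finset.Ioo r p.colHeight).filter (fun r' => c < p.row r')) ∪ Finset.range (r + 1) := by
    ext x
    simp only [Finset.mem_filter, Finset.mem_union, Finset.mem_range, Finset.mem_Ioo]
    constructor
    · rintro ⟨hx, hPx⟩
      rcases Nat.lt_or_ge x (r + 1) with h | h
      · exact Or.inr h
      · exact Or.inl ⟨⟨by omega, hx⟩, hPx⟩
    · rintro (⟨⟨h1, h2⟩, hP⟩ | h)
      · exact ⟨h2, hP⟩
      · refine ⟨by omega, lt_of_lt_of_le hc (rowMono (by omega))⟩
  have hdisj : Disjoint ((Finset.Ioo r p.colHeight).filter (fun r' => c < p.row r'))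
      (Finset.range (r + 1)) := by
    rw [Finset.disjoint_left]
    intro x hx hx'
    simp only [Finset.mem_filter, Finset.mem_Ioo] at hx
    simp only [Finset.mem_range] at hx'
    omega
  have := congrArg Finset.card key
  rw [Finset.card_union_of_disjoint hdisj, Finset.card_range] at this
  rw [colH, arm] at *
  constructor
  · omega
  · have : p.arm r c + r + 1 = p.colH c := by rw [colH, arm]; omega
    omega

end YDPartition
namespace YDPartition

lemma filter_lt_range {n m : ℕ} (h : n ≤ m) :
    (Finset.range m).filter (· < n) = Finset.range n := by
  ext x
  simp only [Finset.mem_filter, Finset.mem_range]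
  omega

lemma wtt_eq_sum (p : YDPartition) :
    p.wtt = ∑ r ∈ Finset.range p.colHeight, ∑ c ∈ Finset.range (p.row r),
      if (p.colH c + c + 1) % 3 = (p.row r + r) % 3 then 1 else 0 := by
  rw [wtt, cells, Finset.filter_filter, Finset.card_filter, Finset.sum_product]
  apply Finset.sum_congr rfl
  intro r hr
  rw [Finset.mem_range] at hr
  have hrow : p.row r ≤ p.rowLen := row_le_head r
  rw [← filter_lt_range hrow, Finset.sum_filter]
  apply Finset.sum_congr rfl
  intro c hc
  rw [Finset.mem_range] at hc
  dsimp only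
  by_cases h : c < p.row r
  · rw [if_pos h]
    have harm := arm_eq hr h
    have hleg : p.leg r c + (c + 1) = p.row r := by
      rw [leg]; omega
    congr 1
    rw [eq_iff_iff]
    obtain ⟨h1, h2⟩ := harm
    constructor
    · rintro ⟨-, h3⟩
      omega
    · intro h3
      exact ⟨h, by omega⟩
  · rw [if_neg h, if_neg (by tauto)]

end YDPartition
namespace YDPartition

/-- Remove the bottom row. -/
def tailP (p : YDPartition) : YDPartition :=
  ⟨p.rows.tail, p.sorted.tail, fun x hx => p.pos x (List.mem_of_mem_tail hx)⟩

lemma row_tailP (p : YDPartition) (r : ℕ) : (tailP p).row r = p.row (r + 1) := by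
  rcases hp : p.rows with _ | ⟨a, l⟩ <;> simp [tailP, row, hp]

lemma colHeight_tailP (p : YDPartition) : (tailP p).colHeight = p.colHeight - 1 := by
  rcases hp : p.rows with _ | ⟨a, l⟩ <;> simp [tailP, colHeight, hp]

lemma rowLen_tailP_le (p : YDPartition) : (tailP p).rowLen ≤ p.rowLen := by
  rw [rowLen, rowLen, row_tailP]
  exact rowMono (by omega)

lemma size_tailP (p : YDPartition) : p.size = p.rowLen + (tailP p).size := by
  rcases hp : p.rows with _ | ⟨a, l⟩ <;> simp [tailP, size, rowLen, row, hp]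

lemma colH_card (p : YDPartition) (c : ℕ) :
    p.colH c = ∑ r ∈ Finset.range p.colHeight, if c < p.row r then 1 else 0 := by
  rw [colH, Finset.card_filter]

lemma colH_tailP {p : YDPartition} {c : ℕ} (hc : c < p.rowLen) :
    p.colH c = (tailP p).colH c + 1 := by
  have h0 : 0 < p.colHeight := rowPos.mpr (by rw [← rowLen] at *; omega)
  have hk : p.colHeight = (tailP p).colHeight + 1 := by
    rw [colHeight_tailP]; omega
  rw [colH_card, colH_card, hk, Finset.sum_range_succ']
  have h1 : (if c < p.row 0 then 1 else 0) = 1 := if_pos (by rw [← rowLen] at *; omega)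
  rw [h1]
  congr 1
  apply Finset.sum_congr rfl
  intro r _
  rw [row_tailP]

/-- Bottom-row decomposition of `wtt`. -/
lemma wtt_row (p : YDPartition) : p.wtt = Gc p (p.rowLen + 2) + (tailP p).wtt := by
  rcases Nat.eq_zero_or_pos p.colHeight with h0 | h0
  · have hj : p.rowLen = 0 := by
      by_contra h
      have := rowPos.mpr (show 0 < p.row 0 by rw [← rowLen]; omega)
      omega
    have ht : (tailP p).colHeight = 0 := by rw [colHeight_tailP]; omega
    rw [wtt_eq_sum, wtt_eq_sum, h0, ht, Gc, hj]
    simp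
  · have hk : p.colHeight = (tailP p).colHeight + 1 := by rw [colHeight_tailP]; omega
    have hA : ∑ r ∈ Finset.range ((tailP p).colHeight), (∑ c ∈ Finset.range (p.row (r + 1)),
        if (p.colH c + c + 1) % 3 = (p.row (r + 1) + (r + 1)) % 3 then 1 else 0)
        = (tailP p).wtt := by
      rw [wtt_eq_sum]
      apply Finset.sum_congr rfl
      intro r _
      rw [row_tailP]
      apply Finset.sum_congr rfl
      intro c hc
      rw [Finset.mem_range] at hc
      have hcj : c < p.rowLen := lt_of_lt_of_le hc (row_le_head _)
      rw [colH_tailP hcj]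
      congr 1
      rw [eq_iff_iff]
      omega
    have hB : (∑ c ∈ Finset.range (p.row 0),
        if (p.colH c + c + 1) % 3 = (p.row 0 + 0) % 3 then 1 else 0)
        = Gc p (p.rowLen + 2) := by
      rw [Gc, rowLen]
      apply Finset.sum_congr rfl
      intro c _
      congr 1
      rw [eq_iff_iff]
      omega
    rw [wtt_eq_sum, hk, Finset.sum_range_succ', hA, hB, Nat.add_comm]

/-- Cons recursion for `Tc`. -/
lemma Tc_cons (p : YDPartition) (m : ℕ) (h0 : 0 < p.colHeight) :
    Tc p m = (if p.rowLen % 3 = m % 3 then 1 else 0) + Tc (tailP p) (m + 2) := by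
  have hk : p.colHeight = (tailP p).colHeight + 1 := by rw [colHeight_tailP]; omega
  have hA : ∑ r ∈ Finset.range ((tailP p).colHeight),
      (if (p.row (r + 1) + (r + 1)) % 3 = m % 3 then 1 else 0) = Tc (tailP p) (m + 2) := by
    rw [Tc]
    apply Finset.sum_congr rfl
    intro r _
    rw [row_tailP]
    congr 1
    rw [eq_iff_iff]
    omega
  have hB : (if (p.row 0 + 0) % 3 = m % 3 then 1 else 0)
      = (if p.rowLen % 3 = m % 3 then 1 else 0) := by
    rw [rowLen]
    congr 1
  rw [Tc, hk, Finset.sum_range_succ', hA, hB, Nat.add_comm]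

end YDPartition
namespace YDPartition

lemma Ic_split {a b c : ℕ} (m : ℕ) (h1 : a ≤ b) (h2 : b ≤ c) :
    Ic a b m + Ic b c m = Ic a c m := by
  rw [Ic, Ic, Ic, Finset.sum_Ico_consecutive _ h1 h2]

lemma Ic_shift (a b m : ℕ) : Ic a b (m + 2) = Ic (a + 1) (b + 1) m := by
  rw [Ic, Ic, Finset.sum_Ico_eq_sum_range, Finset.sum_Ico_eq_sum_range]
  have : b + 1 - (a + 1) = b - a := by omega
  rw [this]
  apply Finset.sum_congr rfl
  intro i _
  congr 1
  rw [eq_iff_iff]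
  have : a + 1 + i = (a + i) + 1 := by omega
  rw [this]
  omega

lemma Ic_single (a m : ℕ) : Ic a (a + 1) m = if a % 3 = m % 3 then 1 else 0 := by
  have : Finset.Ico a (a + 1) = {a} := by rw [Finset.Ico_add_one_right_eq_Icc, Finset.Icc_self]
  rw [Ic, this, Finset.sum_singleton]

lemma rowLen_eq_zero {p : YDPartition} (h : p.colHeight = 0) : p.rowLen = 0 := by
  by_contra hj
  have := rowPos.mpr (show 0 < p.row 0 by rw [← rowLen]; omega)
  omega

/-- Cons recursion for `Gc`. -/
lemma Gc_cons (p : YDPartition) (m : ℕ) (h0 : 0 < p.colHeight) :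
    Gc p m = Gc (tailP p) (m + 2) + Ic (tailP p).rowLen p.rowLen (m + 2) := by
  have hj' : (tailP p).rowLen ≤ p.rowLen := rowLen_tailP_le p
  have hstep : ∀ c ∈ Finset.range p.rowLen,
      (if (p.colH c + c) % 3 = m % 3 then 1 else 0)
      = (if ((tailP p).colH c + c) % 3 = (m + 2) % 3 then 1 else 0) := by
    intro c hc
    rw [Finset.mem_range] at hc
    rw [colH_tailP hc]
    congr 1
    rw [eq_iff_iff]
    omega
  rw [Gc, Finset.sum_congr rfl hstep,
    ← Finset.sum_range_add_sum_Ico _ hj']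
  congr 1
  rw [Ic]
  apply Finset.sum_congr rfl
  intro c hc
  rw [Finset.mem_Ico] at hc
  rw [colH_eq_zero (p := tailP p) (by omega), Nat.zero_add]

/-- The diagonal-count identity: rows vs columns. -/
lemma Tc_sub_Gc_aux : ∀ (n : ℕ) (p : YDPartition) (m : ℕ), p.colHeight = n →
    (Tc p m : ℤ) - Gc p m = Ic 0 p.colHeight m - Ic 0 p.rowLen m := by
  intro n
  induction n with
  | zero =>
    intro p m hn
    have hj := rowLen_eq_zero hn
    rw [Tc, Gc, hn, hj]
    simp [Ic]
  | succ n ih =>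
    intro p m hn
    have h0 : 0 < p.colHeight := by omega
    have hn' : (tailP p).colHeight = n := by rw [colHeight_tailP]; omega
    have hj' : (tailP p).rowLen ≤ p.rowLen := rowLen_tailP_le p
    rw [Tc_cons p m h0, Gc_cons p m h0, hn]
    have hIH := ih (tailP p) (m + 2) hn'
    rw [hn'] at hIH
    have e1 : Ic 0 n (m + 2) = Ic 1 (n + 1) m := Ic_shift 0 n m
    have e2 : Ic 0 (tailP p).rowLen (m + 2) = Ic 1 ((tailP p).rowLen + 1) m :=
      Ic_shift 0 _ m
    have e3 : Ic (tailP p).rowLen p.rowLen (m + 2)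
        = Ic ((tailP p).rowLen + 1) (p.rowLen + 1) m := Ic_shift _ _ m
    have e4 : (if p.rowLen % 3 = m % 3 then 1 else 0) = Ic p.rowLen (p.rowLen + 1) m :=
      (Ic_single _ m).symm
    have s1 : Ic 0 1 m + Ic 1 (n + 1) m = Ic 0 (n + 1) m := Ic_split m (by omega) (by omega)
    have s2 : Ic 0 1 m + Ic 1 ((tailP p).rowLen + 1) m = Ic 0 ((tailP p).rowLen + 1) m :=
      Ic_split m (by omega) (by omega)
    have s3 : Ic 0 ((tailP p).rowLen + 1) m + Ic ((tailP p).rowLen + 1) (p.rowLen + 1) m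
        = Ic 0 (p.rowLen + 1) m := Ic_split m (by omega) (by omega)
    have s4 : Ic 0 p.rowLen m + Ic p.rowLen (p.rowLen + 1) m = Ic 0 (p.rowLen + 1) m :=
      Ic_split m (by omega) (by omega)
    rw [e4]
    push_cast
    push_cast at hIH
    omega

lemma Tc_sub_Gc (p : YDPartition) (m : ℕ) :
    (Tc p m : ℤ) - Gc p m = Ic 0 p.colHeight m - Ic 0 p.rowLen m :=
  Tc_sub_Gc_aux p.colHeight p m rfl

end YDPartition
namespace YDPartition

/-- Row list after removing the first column. -/
def mcolRows (l : List ℕ) : List ℕ := (l.filter (fun x => 1 < x)).map (· - 1)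

lemma mcolRows_sorted {l : List ℕ} (h : l.Pairwise (· ≥ ·)) : (mcolRows l).Pairwise (· ≥ ·) := by
  have hf : (l.filter (fun x => 1 < x)).Pairwise (· ≥ ·) := List.Pairwise.filter _ h
  exact hf.map _ (fun hab => by omega)

lemma mcolRows_pos {l : List ℕ} : ∀ x ∈ mcolRows l, 0 < x := by
  intro x hx
  rw [mcolRows, List.mem_map] at hx
  obtain ⟨y, hy, rfl⟩ := hx
  rw [List.mem_filter] at hy
  have : 1 < y := by simpa using hy.2
  omega

lemma getD_le_one {l : List ℕ} {a : ℕ} (h : l.Pairwise (· ≥ ·)) (ha : ∀ x ∈ l, x ≤ a) (i : ℕ) :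
    l.getD i 0 ≤ a := by
  rcases Nat.lt_or_ge i l.length with hi | hi
  · rw [List.getD_eq_getElem _ _ hi]
    exact ha _ (List.getElem_mem _)
  · rw [List.getD_eq_default _ _ hi]
    exact Nat.zero_le a

lemma mcolRows_getD {l : List ℕ} (h : l.Pairwise (· ≥ ·)) (i : ℕ) :
    (mcolRows l).getD i 0 = l.getD i 0 - 1 := by
  induction l generalizing i with
  | nil => simp [mcolRows]
  | cons a t ih =>
    rw [List.pairwise_cons] at h
    by_cases ha : 1 < a
    · have : mcolRows (a :: t) = (a - 1) :: mcolRows t := by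
        rw [mcolRows, List.filter_cons, if_pos (by simpa using ha)]
        rfl
      rw [this]
      match i with
      | 0 => simp
      | i + 1 =>
        simp only [List.getD_cons_succ]
        exact ih h.2 i
    · have hnil : mcolRows (a :: t) = [] := by
        rw [mcolRows, List.filter_eq_nil_iff.mpr, List.map_nil]
        intro x hx
        rcases List.mem_cons.mp hx with rfl | hx'
        · simpa using ha
        · have := h.1 x hx'
          simp only [decide_eq_true_eq]
          omega
      rw [hnil]
      have : (a :: t).getD i 0 ≤ 1 := by
        apply getD_le_one (l := a :: t) (a := 1)
        · exact List.pairwise_cons.mpr h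
        · intro x hx
          rcases List.mem_cons.mp hx with rfl | hx'
          · omega
          · have := h.1 x hx'
            omega
      simp only [List.getD_nil]
      omega

lemma mcolRows_sum {l : List ℕ} (hpos : ∀ x ∈ l, 0 < x) :
    l.sum = l.length + (mcolRows l).sum := by
  induction l with
  | nil => simp [mcolRows]
  | cons a t ih =>
    have ha : 0 < a := hpos a (by simp)
    have iht := ih (fun x hx => hpos x (List.mem_cons_of_mem _ hx))
    by_cases h1 : 1 < a
    · have : mcolRows (a :: t) = (a - 1) :: mcolRows t := by
        rw [mcolRows, List.filter_cons, if_pos (by simpa using h1)]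
        rfl
      rw [this]
      simp only [List.sum_cons, List.length_cons]
      omega
    · have ha1 : a = 1 := by omega
      have : mcolRows (a :: t) = mcolRows t := by
        rw [mcolRows, List.filter_cons, if_neg (by simpa using h1)]
        rfl
      rw [this]
      simp only [List.sum_cons, List.length_cons]
      omega

/-- Remove the first column. -/
def mcol (p : YDPartition) : YDPartition :=
  ⟨mcolRows p.rows, mcolRows_sorted p.sorted, mcolRows_pos⟩

lemma row_mcol (p : YDPartition) (r : ℕ) : (mcol p).row r = p.row r - 1 :=
  mcolRows_getD p.sorted r

lemma size_mcol (p : YDPartition) : p.size = p.colHeight + (mcol p).size :=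
  mcolRows_sum p.pos

lemma colHeight_mcol_le (p : YDPartition) : (mcol p).colHeight ≤ p.colHeight := by
  by_contra h
  push_neg at h
  have h1 : 0 < (mcol p).row p.colHeight := rowPos.mp h
  have h2 : ¬ (p.colHeight < p.colHeight) := lt_irrefl _
  rw [row_mcol] at h1
  have h3 : 0 < p.row p.colHeight := by omega
  exact h2 (rowPos.mpr h3)

lemma lt_colHeight_mcol {p : YDPartition} {r : ℕ} : r < (mcol p).colHeight ↔ 2 ≤ p.row r := by
  rw [rowPos (p := mcol p), row_mcol]
  omega

lemma colH_mcol (p : YDPartition) (c : ℕ) : (mcol p).colH c = p.colH (c + 1) := by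
  rw [colH_card, colH_card]
  rw [← Finset.sum_range_add_sum_Ico _ (colHeight_mcol_le p)]
  have hzero : ∑ r ∈ Finset.Ico (mcol p).colHeight p.colHeight,
      (if c + 1 < p.row r then 1 else 0) = 0 := by
    apply Finset.sum_eq_zero
    intro r hr
    rw [Finset.mem_Ico] at hr
    have : ¬ 2 ≤ p.row r := fun h => absurd (lt_colHeight_mcol.mpr h) (by omega)
    rw [if_neg (by omega)]
  rw [hzero, Nat.add_zero]
  apply Finset.sum_congr rfl
  intro r hr
  rw [Finset.mem_range] at hr
  have h2 : 2 ≤ p.row r := lt_colHeight_mcol.mp hr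
  rw [row_mcol]
  congr 1
  rw [eq_iff_iff]
  omega

end YDPartition
namespace YDPartition

/-- First-column decomposition of `wtt`. -/
lemma wtt_col (p : YDPartition) : p.wtt = Tc p (p.colHeight + 1) + (mcol p).wtt := by
  rw [wtt_eq_sum p]
  have hper : ∀ r ∈ Finset.range p.colHeight,
      (∑ c ∈ Finset.range (p.row r),
        if (p.colH c + c + 1) % 3 = (p.row r + r) % 3 then 1 else 0)
      = (∑ c ∈ Finset.range (p.row r - 1),
          if (p.colH (c + 1) + (c + 1) + 1) % 3 = (p.row r + r) % 3 then 1 else 0)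
        + (if (p.colH 0 + 0 + 1) % 3 = (p.row r + r) % 3 then 1 else 0) := by
    intro r hr
    rw [Finset.mem_range] at hr
    have hpos : 0 < p.row r := rowPos.mp hr
    have hss := Finset.sum_range_succ'
      (fun c => if (p.colH c + c + 1) % 3 = (p.row r + r) % 3 then 1 else 0) (p.row r - 1)
    rw [show p.row r - 1 + 1 = p.row r by omega] at hss
    exact hss
  rw [Finset.sum_congr rfl hper, Finset.sum_add_distrib,
    Nat.add_comm (Tc p (p.colHeight + 1)) (mcol p).wtt]
  congr 1
  · -- shifted columns match mcol
    rw [wtt_eq_sum]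
    rw [← Finset.sum_range_add_sum_Ico _ (colHeight_mcol_le p)]
    have hzero : ∑ r ∈ Finset.Ico (mcol p).colHeight p.colHeight,
        (∑ c ∈ Finset.range (p.row r - 1),
          if (p.colH (c + 1) + (c + 1) + 1) % 3 = (p.row r + r) % 3 then 1 else 0) = 0 := by
      apply Finset.sum_eq_zero
      intro r hr
      rw [Finset.mem_Ico] at hr
      have : ¬ 2 ≤ p.row r := fun h => absurd (lt_colHeight_mcol.mpr h) (by omega)
      rw [show p.row r - 1 = 0 by omega]
      simp
    rw [hzero, Nat.add_zero]
    apply Finset.sum_congr rfl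
    intro r hr
    have h2 : 2 ≤ p.row r := lt_colHeight_mcol.mp (Finset.mem_range.mp hr)
    rw [row_mcol]
    apply Finset.sum_congr rfl
    intro c _
    rw [colH_mcol]
    congr 1
    rw [eq_iff_iff]
    omega
  · -- first column gives Tc
    rw [Tc]
    apply Finset.sum_congr rfl
    intro r _
    rw [colH_zero]
    congr 1
    rw [eq_iff_iff]
    omega

/-- `Tc` of `mcol`. -/
lemma Tc_mcol (p : YDPartition) (m : ℕ) :
    Tc p m = Tc (mcol p) (m + 2) + Ic ((mcol p).colHeight + 1) (p.colHeight + 1) m := by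
  rw [Tc, ← Finset.sum_range_add_sum_Ico _ (colHeight_mcol_le p)]
  congr 1
  · rw [Tc]
    apply Finset.sum_congr rfl
    intro r hr
    have h2 : 2 ≤ p.row r := lt_colHeight_mcol.mp (Finset.mem_range.mp hr)
    rw [row_mcol]
    congr 1
    rw [eq_iff_iff]
    omega
  · rw [Ic, Finset.sum_Ico_eq_sum_range, Finset.sum_Ico_eq_sum_range]
    rw [show p.colHeight + 1 - ((mcol p).colHeight + 1) = p.colHeight - (mcol p).colHeight
      by omega]
    apply Finset.sum_congr rfl
    intro i hi
    rw [Finset.mem_range] at hi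
    have hrk : (mcol p).colHeight + i < p.colHeight := by omega
    have hpos : 0 < p.row ((mcol p).colHeight + i) := rowPos.mp hrk
    have hnot2 : ¬ 2 ≤ p.row ((mcol p).colHeight + i) :=
      fun h => absurd (lt_colHeight_mcol.mpr h) (by omega)
    have h1 : p.row ((mcol p).colHeight + i) = 1 := by omega
    rw [h1]
    congr 1
    rw [eq_iff_iff]
    omega

end YDPartition
namespace YDPartition

lemma ext' {p q : YDPartition} (h : p.rows = q.rows) : p = q := by
  cases p; cases q; simpa using h

lemma mem_le_rowLen {p : YDPartition} {x : ℕ} (hx : x ∈ p.rows) : x ≤ p.rowLen := by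
  rcases hp : p.rows with _ | ⟨a, l⟩
  · rw [hp] at hx; simp at hx
  · have hs := p.sorted
    rw [hp] at hs hx
    rw [rowLen, row, hp, List.getD_cons_zero]
    rcases List.mem_cons.mp hx with rfl | hx'
    · exact le_refl x
    · exact (List.pairwise_cons.mp hs).1 x hx'

/-- Prepend a longest row. -/
def consP (a : ℕ) (p : YDPartition) (h1 : ∀ x ∈ p.rows, x ≤ a) (h2 : 0 < a) : YDPartition :=
  ⟨a :: p.rows, List.pairwise_cons.mpr ⟨h1, p.sorted⟩, by
    intro x hx
    rcases List.mem_cons.mp hx with rfl | hx'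
    · exact h2
    · exact p.pos x hx'⟩

lemma tailP_consP (a : ℕ) (p : YDPartition) (h1 : ∀ x ∈ p.rows, x ≤ a) (h2 : 0 < a) :
    tailP (consP a p h1 h2) = p := ext' rfl

lemma rowLen_consP (a : ℕ) (p : YDPartition) (h1 : ∀ x ∈ p.rows, x ≤ a) (h2 : 0 < a) :
    (consP a p h1 h2).rowLen = a := rfl

lemma colHeight_consP (a : ℕ) (p : YDPartition) (h1 : ∀ x ∈ p.rows, x ≤ a) (h2 : 0 < a) :
    (consP a p h1 h2).colHeight = p.colHeight + 1 := by
  simp [consP, colHeight]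

lemma size_consP (a : ℕ) (p : YDPartition) (h1 : ∀ x ∈ p.rows, x ≤ a) (h2 : 0 < a) :
    (consP a p h1 h2).size = a + p.size := by
  simp [consP, size]

/-- The `ψ₂⁻¹`-type construction: add one to each row and append `R` rows of length 1. -/
def nuP (q : YDPartition) (R : ℕ) : YDPartition := by
  refine ⟨q.rows.map (· + 1) ++ List.replicate R 1, ?_, ?_⟩
  · rw [List.pairwise_append]
    refine ⟨?_, ?_, ?_⟩
    · exact q.sorted.map _ (fun hab => by omega)
    · exact List.pairwise_replicate.mpr (Or.inr (le_refl 1))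
    · intro x hx y hy
      rw [List.mem_map] at hx
      obtain ⟨z, _, rfl⟩ := hx
      have : y = 1 := List.eq_of_mem_replicate hy
      omega
  · intro x hx
    rcases List.mem_append.mp hx with hx' | hx'
    · rw [List.mem_map] at hx'
      obtain ⟨z, _, rfl⟩ := hx'
      omega
    · have : x = 1 := List.eq_of_mem_replicate hx'
      omega

lemma colHeight_nuP (q : YDPartition) (R : ℕ) : (nuP q R).colHeight = q.colHeight + R := by
  simp [nuP, colHeight]

lemma size_nuP (q : YDPartition) (R : ℕ) : (nuP q R).size = q.size + q.colHeight + R := by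
  rw [size, nuP]
  simp only [List.sum_append, List.sum_replicate, smul_eq_mul, Nat.mul_one]
  have hmap : (q.rows.map (· + 1)).sum = q.rows.sum + q.rows.length := by
    induction q.rows with
    | nil => simp
    | cons a t ih => simp [ih]; omega
  rw [hmap, size, colHeight]

lemma mcol_nuP (q : YDPartition) (R : ℕ) : mcol (nuP q R) = q := by
  apply ext'
  show mcolRows (q.rows.map (· + 1) ++ List.replicate R 1) = q.rows
  rw [mcolRows, List.filter_append]
  have h1 : (q.rows.map (· + 1)).filter (fun x => 1 < x) = q.rows.map (· + 1) := by
    rw [List.filter_eq_self]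
    intro x hx
    rw [List.mem_map] at hx
    obtain ⟨z, hz, rfl⟩ := hx
    have := q.pos z hz
    simpa using this
  have h2 : (List.replicate R 1).filter (fun x => (1 : ℕ) < x) = [] := by
    rw [List.filter_eq_nil_iff]
    intro x hx
    have : x = 1 := List.eq_of_mem_replicate hx
    simp [this]
  rw [h1, h2, List.append_nil, List.map_map]
  have : ((· - 1) ∘ (· + 1) : ℕ → ℕ) = id := by
    funext x
    simp
  rw [this, List.map_id]

lemma row_nuP_lt (q : YDPartition) (R : ℕ) {i : ℕ} (hi : i < q.colHeight) :
    (nuP q R).row i = q.row i + 1 := by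
  rw [row, nuP]
  show ((q.rows.map (· + 1) ++ List.replicate R 1).getD i 0) = _
  rw [List.getD_append _ _ _ _ (by simpa [colHeight] using hi)]
  rw [List.getD_eq_getElem _ _ (by simpa [colHeight] using hi), List.getElem_map]
  rw [row, List.getD_eq_getElem _ _ hi]
  rfl

lemma row_nuP_ge (q : YDPartition) (R : ℕ) {i : ℕ} (hi1 : q.colHeight ≤ i)
    (hi2 : i < q.colHeight + R) : (nuP q R).row i = 1 := by
  have hlt : i < (nuP q R).colHeight := by rw [colHeight_nuP]; omega
  rw [row, nuP] at *
  show ((q.rows.map (· + 1) ++ List.replicate R 1).getD i 0) = 1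
  rw [List.getD_append_right _ _ _ _ (by simpa [colHeight] using hi1)]
  rw [List.getD_eq_getElem _ _ (by simp [colHeight] at *; omega)]
  simp

lemma Tc_nuP (q : YDPartition) (R : ℕ) (m : ℕ) :
    Tc (nuP q R) m = Tc q (m + 2) + Ic (q.colHeight + 1) (q.colHeight + R + 1) m := by
  rw [Tc, colHeight_nuP, ← Finset.sum_range_add_sum_Ico _ (show q.colHeight ≤ q.colHeight + R by omega)]
  congr 1
  · rw [Tc]
    apply Finset.sum_congr rfl
    intro r hr
    rw [Finset.mem_range] at hr
    rw [row_nuP_lt q R hr]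
    congr 1
    rw [eq_iff_iff]
    omega
  · rw [Ic, Finset.sum_Ico_eq_sum_range, Finset.sum_Ico_eq_sum_range]
    rw [show q.colHeight + R + 1 - (q.colHeight + 1) = q.colHeight + R - q.colHeight by omega]
    apply Finset.sum_congr rfl
    intro i hi
    rw [Finset.mem_range] at hi
    rw [row_nuP_ge q R (by omega) (by omega)]
    congr 1
    rw [eq_iff_iff]
    omega

end YDPartition
namespace YDPartition

lemma Tc_mod (p : YDPartition) {m m' : ℕ} (h : m % 3 = m' % 3) : Tc p m = Tc p m' := by
  rw [Tc, Tc]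
  apply Finset.sum_congr rfl
  intro r _
  rw [h]

lemma two_wtt_le_size : ∀ (n : ℕ) (p : YDPartition), p.size = n → 2 * p.wtt ≤ n := by
  intro n
  induction n using Nat.strong_induction_on with
  | _ n ih =>
  intro p hsz
  rcases Nat.eq_zero_or_pos p.colHeight with hk0 | hk0
  · have h0 : p.wtt = 0 := by rw [wtt_eq_sum, hk0]; simp
    omega
  have hj0 : 0 < p.rowLen := by rw [rowLen]; exact rowPos.mp hk0
  have hszm := size_mcol p
  have hszt := size_tailP p
  by_cases hcase : p.rowLen ≤ p.colHeight
  · -- ρ case: j ≤ k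
    by_cases hk1 : p.colHeight = 1
    · -- p = [1]
      have hj1 : p.rowLen = 1 := by omega
      have htail : (tailP p).colHeight = 0 := by rw [colHeight_tailP]; omega
      have hwt : (tailP p).wtt = 0 := by rw [wtt_eq_sum, htail]; simp
      have hG : Gc p (p.rowLen + 2) = 0 := by
        rw [Gc, hj1, Finset.sum_range_one, colH_zero, hk1]
        norm_num
      have hw := wtt_row p
      rw [hG, hwt] at hw
      omega
    · -- k ≥ 2
      have hk2 : 2 ≤ p.colHeight := by omega
      have hmr : (mcol p).rowLen = p.rowLen - 1 := by
        rw [rowLen, row_mcol, ← rowLen]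
      have hle : ∀ x ∈ (mcol p).rows, x ≤ p.colHeight - 1 := by
        intro x hx
        have h1 : x ≤ (mcol p).rowLen := mem_le_rowLen hx
        omega
      have hpos : 0 < p.colHeight - 1 := by omega
      have hk' : (mcol p).colHeight ≤ p.colHeight := colHeight_mcol_le p
      -- key identity: Tc p (k+1) = Gc μ (k+1)
      have hTG := Tc_sub_Gc (consP (p.colHeight - 1) (mcol p) hle hpos) (p.colHeight + 1)
      rw [colHeight_consP, rowLen_consP] at hTG
      have hTcons := Tc_cons (consP (p.colHeight - 1) (mcol p) hle hpos) (p.colHeight + 1)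
        (by rw [colHeight_consP]; omega)
      rw [rowLen_consP, tailP_consP] at hTcons
      rw [if_neg (by omega)] at hTcons
      have hTm := Tc_mcol p (p.colHeight + 1)
      have hs1 : Ic 0 ((mcol p).colHeight + 1) (p.colHeight + 1) +
          Ic ((mcol p).colHeight + 1) (p.colHeight + 1) (p.colHeight + 1)
          = Ic 0 (p.colHeight + 1) (p.colHeight + 1) := Ic_split _ (by omega) (by omega)
      have hs2 : Ic 0 (p.colHeight - 1) (p.colHeight + 1) +
          Ic (p.colHeight - 1) p.colHeight (p.colHeight + 1)
          = Ic 0 p.colHeight (p.colHeight + 1) := Ic_split _ (by omega) (by omega)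
      have hs3 : Ic 0 p.colHeight (p.colHeight + 1) +
          Ic p.colHeight (p.colHeight + 1) (p.colHeight + 1)
          = Ic 0 (p.colHeight + 1) (p.colHeight + 1) := Ic_split _ (by omega) (by omega)
      have hv1 : Ic (p.colHeight - 1) p.colHeight (p.colHeight + 1) = 0 := by
        have := Ic_single (p.colHeight - 1) (p.colHeight + 1)
        rw [show p.colHeight - 1 + 1 = p.colHeight by omega] at this
        rw [this, if_neg (by omega)]
      have hv2 : Ic p.colHeight (p.colHeight + 1) (p.colHeight + 1) = 0 := by
        rw [Ic_single, if_neg (by omega)]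
      have hkey : Tc p (p.colHeight + 1)
          = Gc (consP (p.colHeight - 1) (mcol p) hle hpos) (p.colHeight + 1) := by omega
      have e1 := wtt_col p
      have e2 := wtt_row (consP (p.colHeight - 1) (mcol p) hle hpos)
      rw [rowLen_consP, tailP_consP,
        show p.colHeight - 1 + 2 = p.colHeight + 1 by omega] at e2
      have hszμ := size_consP (p.colHeight - 1) (mcol p) hle hpos
      have hIH := ih (n - 1) (by omega)
        (consP (p.colHeight - 1) (mcol p) hle hpos) (by omega)
      omega
  · -- ψ case: j ≥ k + 1
    have hjk : p.colHeight + 1 ≤ p.rowLen := by omega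
    have hq : (tailP p).colHeight = p.colHeight - 1 := colHeight_tailP p
    -- key identity: Gc p (j+2) = Tc ν (j+2) + 1
    have hTG := Tc_sub_Gc p (p.rowLen + 2)
    have hTcons := Tc_cons p (p.rowLen + 2) hk0
    rw [if_neg (by omega)] at hTcons
    have hTν := Tc_nuP (tailP p) (p.rowLen - 1 - p.colHeight) (p.rowLen + 2)
    rw [hq, show p.colHeight - 1 + 1 = p.colHeight by omega,
      show p.colHeight - 1 + (p.rowLen - 1 - p.colHeight) + 1 = p.rowLen - 1 by omega] at hTν
    have hs1 : Ic 0 p.colHeight (p.rowLen + 2) + Ic p.colHeight (p.rowLen - 1) (p.rowLen + 2)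
        = Ic 0 (p.rowLen - 1) (p.rowLen + 2) := Ic_split _ (by omega) (by omega)
    have hs2 : Ic 0 (p.rowLen - 1) (p.rowLen + 2) + Ic (p.rowLen - 1) p.rowLen (p.rowLen + 2)
        = Ic 0 p.rowLen (p.rowLen + 2) := Ic_split _ (by omega) (by omega)
    have hv1 : Ic (p.rowLen - 1) p.rowLen (p.rowLen + 2) = 1 := by
      have := Ic_single (p.rowLen - 1) (p.rowLen + 2)
      rw [show p.rowLen - 1 + 1 = p.rowLen by omega] at this
      rw [this, if_pos (by omega)]
    have hkey : Gc p (p.rowLen + 2)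
        = Tc (nuP (tailP p) (p.rowLen - 1 - p.colHeight)) (p.rowLen + 2) + 1 := by omega
    have e1 := wtt_row p
    have e2 := wtt_col (nuP (tailP p) (p.rowLen - 1 - p.colHeight))
    rw [mcol_nuP, colHeight_nuP, hq,
      show p.colHeight - 1 + (p.rowLen - 1 - p.colHeight) + 1 = p.rowLen - 1 by omega] at e2
    rw [Tc_mod _ (show (p.rowLen - 1) % 3 = (p.rowLen + 2) % 3 by omega)] at e2
    have hszν := size_nuP (tailP p) (p.rowLen - 1 - p.colHeight)
    rw [hq] at hszν
    have hIH := ih (n - 2) (by omega) (nuP (tailP p) (p.rowLen - 1 - p.colHeight)) (by omega)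
    omega

end YDPartition


open YDPartition in
/-- `b̃_{k,n}`, the number of partitions of `n` with `w̃t = k`,
vanishes for `k > n/2`. -/
theorem btilde_vanishes (k n : ℕ) (h : n < 2 * k) :
    {p : YDPartition | p.size = n ∧ p.wtt = k} = ∅ := by
  rw [Set.eq_empty_iff_forall_notMem]
  rintro p ⟨h1, h2⟩
  have := YDPartition.two_wtt_le_size n p h1
  omega
end

section
/- For every n ≥ 2, the number of partitions λ of 2n with w̃t(λ) = n is exactly 1, where w̃t(λ) = |{□ ∈ λ : a(□) + 1 ≡ l(□) (mod 3)}|. -/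
namespace PartitionAux
open List

def cnt (t : List ℕ) (c : ℕ) : ℕ := t.countP (fun x => decide (c < x))
def Fc (t : List ℕ) (A m : ℕ) : ℕ :=
  (List.range A).countP (fun c => decide ((cnt t c + c) % 3 = m % 3))
def Gc (t : List ℕ) (B m : ℕ) : ℕ :=
  (List.range B).countP (fun i => decide ((t.getD i 0 + i) % 3 = m % 3))
def Rr (A m : ℕ) : ℕ := (List.range A).countP (fun c => decide (c % 3 = m % 3))
def wttL : List ℕ → ℕ
  | [] => 0
  | a :: t => Fc t a (a + 1) + wttL t
def addCol (B : ℕ) (t : List ℕ) : List ℕ := (List.range B).map (fun i => t.getD i 0 + 1)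

lemma getD_tail (t : List ℕ) (i : ℕ) : t.tail.getD i 0 = t.getD (i + 1) 0 := by
  cases t <;> simp [List.getD]

lemma Rr_succ (a m : ℕ) : Rr (a + 1) m = Rr a m + (if a % 3 = m % 3 then 1 else 0) := by
  simp only [Rr, List.range_succ, List.countP_append, List.countP_cons, List.countP_nil]
  split <;> simp_all

lemma Rr_shift (a m : ℕ) :
    Rr a (m + 2) + (if 0 % 3 = m % 3 then 1 else 0)
      = Rr a m + (if a % 3 = m % 3 then 1 else 0) := by
  induction a with
  | zero => simp [Rr]
  | succ a ih =>
    rw [Rr_succ, Rr_succ]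
    have h1 : (a % 3 = (m + 2) % 3) ↔ ((a + 1) % 3 = m % 3) := by omega
    by_cases h : a % 3 = (m+2) % 3
    · rw [if_pos h, if_pos (h1.mp h)]; omega
    · rw [if_neg h, if_neg (fun hh => h (h1.mpr hh))]; omega

end PartitionAux
namespace PartitionAux
open List

lemma countP_decide_congr (l : List ℕ) (p q : ℕ → Prop) [DecidablePred p] [DecidablePred q]
    (h : ∀ x ∈ l, p x ↔ q x) :
    l.countP (fun x => decide (p x)) = l.countP (fun x => decide (q x)) := by
  apply List.countP_congr
  intro x hx
  simp only [decide_eq_true_eq]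
  exact h x hx

lemma master : ∀ (t : List ℕ), t.Pairwise (· ≥ ·) → ∀ A B m, (∀ x ∈ t, x ≤ A) →
    t.length ≤ B → Fc t A m + Rr B m = Gc t B m + Rr A m := by
  intro t
  induction t with
  | nil =>
    intro _ A B m _ _
    have h1 : Fc [] A m = Rr A m := by
      simp [Fc, Rr, cnt]
    have h2 : Gc [] B m = Rr B m := by
      simp [Gc, Rr]
    omega
  | cons a t ih =>
    intro hs A B m hA hB
    obtain ⟨B', rfl⟩ : ∃ B', B = B' + 1 := ⟨B - 1, by simp at hB; omega⟩
    have hst : t.Pairwise (· ≥ ·) := hs.of_cons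
    have hta : ∀ x ∈ t, x ≤ a := fun x hx => List.rel_of_pairwise_cons hs hx
    have htB : t.length ≤ B' := by simp at hB; omega
    have haA : a ≤ A := hA a (List.mem_cons_self)
    have h1 : Fc (a :: t) A m + Rr a m = Fc t a (m + 2) + Rr A m := by
      obtain ⟨d, rfl⟩ : ∃ d, A = a + d := ⟨A - a, by omega⟩
      have hr : List.range (a + d) = List.range a ++ (List.range d).map (a + ·) :=
        List.range_add
      have e1 : Fc (a :: t) (a + d) m
          = Fc t a (m + 2)
            + (List.range d).countP (fun c => decide ((a + c) % 3 = m % 3)) := by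
        rw [Fc, hr, List.countP_append, List.countP_map]
        congr 1
        · apply List.countP_congr
          intro c hc
          simp only [List.mem_range] at hc
          have h2 : cnt (a :: t) c = cnt t c + 1 := by
            simp [cnt, List.countP_cons, hc]
          simp only [h2, decide_eq_true_eq, Fc]
          constructor <;> (intro h; omega)
        · apply List.countP_congr
          intro c _
          have h2 : cnt (a :: t) (a + c) = 0 := by
            rw [cnt, List.countP_eq_zero]
            intro x hx
            simp only [decide_eq_true_eq, not_lt]
            rcases List.mem_cons.mp hx with h | h
            · omega
            · have := hta x h; omega
          simp only [Function.comp, h2, decide_eq_true_eq]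
          constructor <;> (intro h; omega)
      have e2 : Rr (a + d) m
          = Rr a m + (List.range d).countP (fun c => decide ((a + c) % 3 = m % 3)) := by
        rw [Rr, hr, List.countP_append, List.countP_map]
        rfl
      omega
    have h2 := ih hst a B' (m + 2) hta htB
    have h3 : Rr (B' + 1) m = (if 0 % 3 = m % 3 then 1 else 0) + Rr B' (m + 2) := by
      rw [Rr, List.range_succ_eq_map, List.countP_cons, List.countP_map]
      have e : ((List.range B').countP fun i =>
            (fun c => decide (c % 3 = m % 3)) (Nat.succ i))
          = Rr B' (m + 2) := by
        apply List.countP_congr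
        intro c _
        simp only [decide_eq_true_eq, Rr]
        constructor <;> (intro h; omega)
      rw [Function.comp_def, e]
      split <;> rename_i h
      · simp only [decide_eq_true_eq] at h
        rw [if_pos (by omega : 0 % 3 = m % 3)]
        omega
      · simp only [decide_eq_true_eq] at h
        rw [if_neg (by omega : ¬ 0 % 3 = m % 3)]
        omega
    have h4 : Gc (a :: t) (B' + 1) m
        = (if a % 3 = m % 3 then 1 else 0) + Gc t B' (m + 2) := by
      rw [Gc, List.range_succ_eq_map, List.countP_cons, List.countP_map]
      have e : ((List.range B').countP fun i =>
            (fun i => decide (((a :: t).getD i 0 + i) % 3 = m % 3)) (Nat.succ i))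
          = Gc t B' (m + 2) := by
        apply List.countP_congr
        intro c _
        simp only [decide_eq_true_eq, Gc, List.getD_cons_succ]
        constructor <;> (intro h; omega)
      rw [Function.comp_def, e]
      simp only [List.getD_cons_zero]
      split <;> rename_i h
      · simp only [decide_eq_true_eq] at h
        rw [if_pos (by omega : a % 3 = m % 3)]
        omega
      · simp only [decide_eq_true_eq] at h
        rw [if_neg (by omega : ¬ a % 3 = m % 3)]
        omega
    have h5 := Rr_shift a m
    omega

end PartitionAux
namespace PartitionAux
open List

lemma addCol_succ (B : ℕ) (t : List ℕ) :
    addCol (B + 1) t = (t.getD 0 0 + 1) :: addCol B t.tail := by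
  rw [addCol, List.range_succ_eq_map, List.map_cons, List.map_map]
  congr 1
  apply List.map_congr_left
  intro i _
  simp [Function.comp, getD_tail]

lemma length_addCol (B : ℕ) (t : List ℕ) : (addCol B t).length = B := by
  simp [addCol]

lemma countP_range_getD (p : ℕ → Bool) (hp : p 0 = false) :
    ∀ (s : List ℕ) (B : ℕ), s.length ≤ B →
      (List.range B).countP (fun i => p (s.getD i 0)) = s.countP p := by
  intro s
  induction s with
  | nil =>
    intro B _
    simp only [List.countP_nil]
    apply List.countP_eq_zero.mpr
    intro i _
    simpa [List.getD] using hp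
  | cons a s ih =>
    intro B hB
    obtain ⟨B', rfl⟩ : ∃ B', B = B' + 1 := ⟨B - 1, by simp at hB; omega⟩
    rw [List.range_succ_eq_map, List.countP_cons, List.countP_map, Function.comp_def]
    simp only [List.getD_cons_zero, List.getD_cons_succ]
    rw [ih B' (by simp at hB; omega)]
    rw [List.countP_cons]

lemma cnt_addCol_zero (B : ℕ) (s : List ℕ) : cnt (addCol B s) 0 = B := by
  rw [cnt, addCol, List.countP_map]
  rw [show ((fun x => decide (0 < x)) ∘ fun i => s.getD i 0 + 1) = fun _ => true by
    funext i; simp]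
  simp [List.countP_true]

lemma cnt_addCol_succ (B : ℕ) (s : List ℕ) (c : ℕ) (h : s.length ≤ B) :
    cnt (addCol B s) (c + 1) = cnt s c := by
  rw [cnt, addCol, List.countP_map, Function.comp_def]
  have e : (fun i => decide (c + 1 < s.getD i 0 + 1)) = fun i =>
      (fun x => decide (c < x)) (s.getD i 0) := by
    funext i
    simp only [decide_eq_decide]
    omega
  rw [e]
  exact countP_range_getD (fun x => decide (c < x)) (by simp) s B h

lemma wttL_head_tail (t : List ℕ) :
    wttL t = Fc t.tail (t.getD 0 0) (t.getD 0 0 + 1) + wttL t.tail := by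
  cases t with
  | nil => simp [wttL, Fc]
  | cons a t => rfl

lemma wttL_addCol : ∀ (B : ℕ) (t : List ℕ), t.length ≤ B →
    wttL (addCol B t) = wttL t + Gc t B B := by
  intro B
  induction B with
  | zero =>
    intro t ht
    have : t = [] := List.length_eq_zero_iff.mp (by omega)
    subst this
    simp [addCol, wttL, Gc]
  | succ B ih =>
    intro t ht
    set a := t.getD 0 0 with ha
    rw [addCol_succ, wttL]
    have htt : t.tail.length ≤ B := by
      cases t <;> simp_all <;> omega
    rw [ih t.tail htt]
    have hF : Fc (addCol B t.tail) (a + 1) (a + 1 + 1)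
        = (if B % 3 = (a + 2) % 3 then 1 else 0) + Fc t.tail a (a + 1) := by
      rw [Fc, List.range_succ_eq_map, List.countP_cons, List.countP_map, Function.comp_def]
      have e : ((List.range a).countP fun i =>
            decide ((cnt (addCol B t.tail) (Nat.succ i) + Nat.succ i) % 3 = (a + 1 + 1) % 3))
          = Fc t.tail a (a + 1) := by
        apply List.countP_congr
        intro c _
        rw [show Nat.succ c = c + 1 from rfl, cnt_addCol_succ B t.tail c htt]
        simp only [decide_eq_true_eq, Fc]
        constructor <;> (intro h; omega)
      rw [e, cnt_addCol_zero]
      split <;> rename_i h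
      · simp only [decide_eq_true_eq] at h
        rw [if_pos (by omega : B % 3 = (a + 2) % 3)]
        omega
      · simp only [decide_eq_true_eq] at h
        rw [if_neg (by omega : ¬ B % 3 = (a + 2) % 3)]
        omega
    have hG : Gc t (B + 1) (B + 1)
        = (if B % 3 = (a + 2) % 3 then 1 else 0) + Gc t.tail B B := by
      rw [Gc, List.range_succ_eq_map, List.countP_cons, List.countP_map, Function.comp_def]
      have e : ((List.range B).countP fun i =>
            decide ((t.getD (Nat.succ i) 0 + Nat.succ i) % 3 = (B + 1) % 3))
          = Gc t.tail B B := by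
        apply List.countP_congr
        intro c _
        rw [show Nat.succ c = c + 1 from rfl, ← getD_tail]
        simp only [decide_eq_true_eq, Gc]
        constructor <;> (intro h; omega)
      rw [e]
      split <;> rename_i h
      · simp only [decide_eq_true_eq] at h
        rw [if_pos (by omega : B % 3 = (a + 2) % 3)]
        omega
      · simp only [decide_eq_true_eq] at h
        rw [if_neg (by omega : ¬ B % 3 = (a + 2) % 3)]
        omega
    have hW := wttL_head_tail t
    rw [← ha] at hW ⊢
    omega

end PartitionAux
namespace PartitionAux
open List

lemma sum_head_tail (t : List ℕ) : t.sum = t.getD 0 0 + t.tail.sum := by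
  cases t <;> simp

lemma sum_addCol : ∀ (B : ℕ) (t : List ℕ), t.length ≤ B →
    (addCol B t).sum = B + t.sum := by
  intro B
  induction B with
  | zero =>
    intro t ht
    have : t = [] := List.length_eq_zero_iff.mp (by omega)
    subst this
    simp [addCol]
  | succ B ih =>
    intro t ht
    rw [addCol_succ, List.sum_cons, ih t.tail (by cases t <;> simp_all <;> omega)]
    have := sum_head_tail t
    omega

lemma getD_anti {l : List ℕ} (hs : l.Pairwise (· ≥ ·)) {i j : ℕ} (hij : i ≤ j) :
    l.getD j 0 ≤ l.getD i 0 := by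
  by_cases hj : j < l.length
  · have hi : i < l.length := lt_of_le_of_lt hij hj
    rw [List.getD_eq_getElem l 0 hj, List.getD_eq_getElem l 0 hi]
    rcases eq_or_lt_of_le hij with rfl | hlt
    · exact le_refl _
    · exact List.pairwise_iff_getElem.mp hs i j hi hj hlt
  · rw [List.getD_eq_default l 0 (by omega)]
    exact Nat.zero_le _

lemma addCol_sorted {t : List ℕ} (hs : t.Pairwise (· ≥ ·)) (B : ℕ) :
    (addCol B t).Pairwise (· ≥ ·) := by
  rw [addCol, List.pairwise_map]
  have h := (List.pairwise_lt_range : List.Pairwise (· < ·) (List.range B))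
  apply h.imp
  intro i j hij
  have := getD_anti hs (le_of_lt hij)
  omega

lemma addCol_pos (B : ℕ) (t : List ℕ) : ∀ x ∈ addCol B t, 0 < x := by
  intro x hx
  rw [addCol, List.mem_map] at hx
  obtain ⟨i, _, rfl⟩ := hx
  omega

lemma mem_le_head {l : List ℕ} (hs : l.Pairwise (· ≥ ·)) {x : ℕ} (hx : x ∈ l) :
    x ≤ l.getD 0 0 := by
  cases l with
  | nil => simp at hx
  | cons a t =>
    rcases List.mem_cons.mp hx with rfl | h
    · simp
    · simpa using List.rel_of_pairwise_cons hs h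

/-- Reconstruction: a sorted positive list equals `addCol` of its column-removal. -/
lemma rows_addCol : ∀ (l : List ℕ), l.Pairwise (· ≥ ·) → (∀ x ∈ l, 0 < x) →
    addCol l.length (((l.map (· - 1)).filter (fun x => decide (0 < x)))) = l := by
  intro l
  induction l with
  | nil => simp [addCol]
  | cons a t ih =>
    intro hs hp
    have hst : t.Pairwise (· ≥ ·) := hs.of_cons
    have htp : ∀ x ∈ t, 0 < x := fun x hx => hp x (List.mem_cons_of_mem a hx)
    have ha : 0 < a := hp a (List.mem_cons_self)
    by_cases h2 : 2 ≤ a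
    · have hfil : ((a :: t).map (· - 1)).filter (fun x => decide (0 < x))
          = (a - 1) :: ((t.map (· - 1)).filter (fun x => decide (0 < x))) := by
        simp only [List.map_cons, List.filter_cons]
        rw [if_pos (by simp; omega)]
      rw [hfil, List.length_cons, addCol_succ]
      simp only [List.getD_cons_zero, List.tail_cons]
      rw [ih hst htp]
      congr 1
      omega
    · have ha1 : a = 1 := by omega
      subst ha1
      have hall : ∀ x ∈ (1 : ℕ) :: t, x = 1 := by
        intro x hx
        have h1 := mem_le_head hs hx
        have h2 := hp x hx
        simp only [List.getD_cons_zero] at h1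
        omega
      have hfil : (((1 : ℕ) :: t).map (· - 1)).filter (fun x => decide (0 < x)) = [] := by
        rw [List.filter_eq_nil_iff]
        intro x hx
        rw [List.mem_map] at hx
        obtain ⟨y, hy, rfl⟩ := hx
        have := hall y hy
        simp [this]
      rw [hfil]
      have : ∀ B, addCol B ([] : List ℕ) = List.replicate B 1 := by
        intro B
        rw [addCol, List.eq_replicate_iff]
        constructor
        · simp
        · intro x hx
          rw [List.mem_map] at hx
          obtain ⟨i, _, rfl⟩ := hx
          simp [List.getD]
      rw [this]
      symm
      rw [List.eq_replicate_iff]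
      exact ⟨by simp, hall⟩

end PartitionAux

namespace PartitionAux
open List YDPartition

lemma card_filter_range_eq_countP (n : ℕ) (p : ℕ → Prop) [DecidablePred p] :
    ((Finset.range n).filter p).card = (List.range n).countP (fun i => decide (p i)) := by
  induction n with
  | zero => simp
  | succ n ih =>
    rw [Finset.range_add_one, Finset.filter_insert, List.range_succ, List.countP_append,
      List.countP_cons, List.countP_nil]
    by_cases h : p n
    · rw [if_pos h, Finset.card_insert_of_notMem (by simp), ih]
      simp [h]
    · rw [if_neg h, ih]
      simp [h]

lemma card_Ioo_filter (k r : ℕ) (P : ℕ → Prop) [DecidablePred P] :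
    ((Finset.Ioo r k).filter P).card
      = ((Finset.range (k - (r + 1))).filter (fun i => P (r + 1 + i))).card := by
  apply Finset.card_nbij' (fun a => a - (r + 1)) (fun i => r + 1 + i)
  · intro a ha
    simp only [Finset.mem_coe, Finset.mem_filter, Finset.mem_Ioo] at ha
    simp only [Finset.mem_coe, Finset.mem_filter, Finset.mem_range]
    have he : r + 1 + (a - (r + 1)) = a := by omega
    rw [he]
    exact ⟨by omega, ha.2⟩
  · intro i hi
    simp only [Finset.mem_coe, Finset.mem_filter, Finset.mem_range] at hi
    simp only [Finset.mem_coe, Finset.mem_filter, Finset.mem_Ioo]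
    exact ⟨⟨by omega, by omega⟩, hi.2⟩
  · intro a ha
    simp only [Finset.mem_coe, Finset.mem_filter, Finset.mem_Ioo] at ha
    dsimp only
    omega
  · intro i _
    dsimp only
    omega

lemma getD_drop (l : List ℕ) (n i : ℕ) : (l.drop n).getD i 0 = l.getD (n + i) 0 := by
  rw [List.getD_eq_getElem?_getD, List.getD_eq_getElem?_getD, List.getElem?_drop]

lemma arm_eq (p : YDPartition) (r c : ℕ) :
    p.arm r c = cnt (p.rows.drop (r + 1)) c := by
  rw [YDPartition.arm, card_Ioo_filter, card_filter_range_eq_countP]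
  have hlen : (p.rows.drop (r + 1)).length = p.colHeight - (r + 1) := by
    simp [YDPartition.colHeight]
  rw [cnt, ← countP_range_getD (fun x => decide (c < x)) (by simp)
    (p.rows.drop (r + 1)) _ (le_of_eq hlen)]
  apply List.countP_congr
  intro i _
  simp [getD_drop, YDPartition.row]

lemma row_le_rowLen (p : YDPartition) (r : ℕ) : p.row r ≤ p.rowLen := by
  exact getD_anti p.sorted (Nat.zero_le r)

lemma sum_Fc : ∀ l : List ℕ,
    (∑ r ∈ Finset.range l.length, Fc (l.drop (r + 1)) (l.getD r 0) (l.getD r 0 + 1))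
      = wttL l := by
  intro l
  induction l with
  | nil => simp [wttL]
  | cons a t ih =>
    rw [List.length_cons, Finset.sum_range_succ']
    simp only [List.drop_succ_cons, List.getD_cons_succ, List.getD_cons_zero, List.drop_zero,
      List.drop_one, List.tail_cons]
    rw [ih, wttL]
    omega

lemma wtt_eq (p : YDPartition) : p.wtt = wttL p.rows := by
  rw [YDPartition.wtt, YDPartition.cells, Finset.filter_filter, Finset.card_filter,
    Finset.sum_product]
  have hrow : ∀ r ∈ Finset.range p.colHeight,
      (∑ c ∈ Finset.range p.rowLen,
        if c < p.row r ∧ (p.arm r c + 1) % 3 = p.leg r c % 3 then 1 else 0)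
      = Fc (p.rows.drop (r + 1)) (p.rows.getD r 0) (p.rows.getD r 0 + 1) := by
    intro r _
    have hsub : Finset.range (p.row r) ⊆ Finset.range p.rowLen :=
      Finset.range_subset_range.mpr (row_le_rowLen p r)
    rw [← Finset.sum_subset hsub (by
      intro c _ hc
      simp only [Finset.mem_range] at hc
      rw [if_neg]
      intro hcon
      exact hc hcon.1)]
    have : ∀ c ∈ Finset.range (p.row r),
        (if c < p.row r ∧ (p.arm r c + 1) % 3 = p.leg r c % 3 then 1 else 0)
        = if (cnt (p.rows.drop (r + 1)) c + c) % 3 = (p.rows.getD r 0 + 1) % 3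
          then 1 else 0 := by
      intro c hc
      simp only [Finset.mem_range] at hc
      apply if_congr _ rfl rfl
      rw [← arm_eq]
      simp only [YDPartition.leg, YDPartition.row] at hc ⊢
      constructor
      · rintro ⟨_, h⟩
        omega
      · intro h
        exact ⟨by omega, by omega⟩
    rw [Finset.sum_congr rfl this, ← Finset.card_filter, card_filter_range_eq_countP]
    rfl
  rw [Finset.sum_congr rfl hrow]
  exact sum_Fc p.rows

end PartitionAux


namespace PartitionAux
open YDPartition

lemma Fc_mod3 (t : List ℕ) (A m : ℕ) : Fc t A (m + 3) = Fc t A m := by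
  apply List.countP_congr
  intro c _
  simp only [decide_eq_true_eq]
  constructor <;> (intro h; omega)

lemma partition_ext {p q : YDPartition} (h : p.rows = q.rows) : p = q := by
  cases p; cases q; simpa using h

lemma tail_sorted {l : List ℕ} (h : l.Pairwise (· ≥ ·)) : l.tail.Pairwise (· ≥ ·) := by
  cases l with
  | nil => simp
  | cons a t => exact h.of_cons

lemma rho1_spec {p q : YDPartition} (h : YDPartition.rho1? p = some q) :
    q.size = p.size + 1 ∧ q.wtt = p.wtt := by
  rw [YDPartition.rho1?] at h
  split at h
  case isFalse => exact absurd h (by simp)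
  case isTrue hg =>
    have hq : q.rows = YDPartition.rho1Rows p := by
      cases h
      rfl
    have hrows : YDPartition.rho1Rows p = addCol (p.rowLen + 1) p.rows.tail := rfl
    have hk : p.rows.length ≤ p.rowLen + 2 := hg.1
    have hlen : p.rows.tail.length ≤ p.rowLen + 1 := by
      rw [List.length_tail]
      omega
    have hsum := sum_addCol (p.rowLen + 1) p.rows.tail hlen
    have hst : p.rows.tail.Pairwise (· ≥ ·) := tail_sorted p.sorted
    have hxa : ∀ x ∈ p.rows.tail, x ≤ p.rowLen := by
      intro x hx
      exact mem_le_head p.sorted (List.mem_of_mem_tail hx)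
    have hM := master p.rows.tail hst (p.rowLen) (p.rowLen + 1) (p.rowLen + 1) hxa hlen
    have hR : Rr (p.rowLen + 1) (p.rowLen + 1)
        = Rr p.rowLen (p.rowLen + 1) := by
      rw [Rr_succ, if_neg (show ¬ p.rowLen % 3 = (p.rowLen + 1) % 3 by omega)]
      omega
    have hwq : q.wtt = wttL p.rows.tail + Gc p.rows.tail (p.rowLen + 1) (p.rowLen + 1) := by
      rw [wtt_eq, hq, hrows, wttL_addCol _ _ hlen]
    have hwp : p.wtt = Fc p.rows.tail p.rowLen (p.rowLen + 1) + wttL p.rows.tail := by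
      rw [wtt_eq, wttL_head_tail]
      rfl
    have hsz : q.size = p.rowLen + 1 + p.rows.tail.sum := by
      rw [YDPartition.size, hq, hrows, hsum]
    have hsz2 : p.size = p.rowLen + p.rows.tail.sum := by
      rw [YDPartition.size, sum_head_tail]
      rfl
    constructor
    · omega
    · omega

lemma psi2_spec {p q : YDPartition} (h : YDPartition.psi2? p = some q) :
    q.size = p.size + 2 ∧ q.wtt = p.wtt + 1 := by
  rw [YDPartition.psi2?] at h
  split at h
  case isFalse => exact absurd h (by simp)
  case isTrue hg =>
    have hq : q.rows = YDPartition.psi2Rows p := by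
      cases h
      rfl
    set k := p.colHeight with hkdef
    set s := (p.rows.map (· - 1)).filter (fun x => decide (0 < x)) with hsdef
    have hrows : YDPartition.psi2Rows p = (k + 2) :: s := rfl
    have hss : s.Pairwise (· ≥ ·) := by
      have := hg.1
      rw [hrows] at this
      exact this.of_cons
    have hxs : ∀ x ∈ s, x ≤ k + 2 := by
      intro x hx
      have := hg.1
      rw [hrows] at this
      exact List.rel_of_pairwise_cons this hx
    have hrec : addCol k s = p.rows := rows_addCol p.rows p.sorted p.pos
    have hslen : s.length ≤ k := by
      have h1 : s.length ≤ (p.rows.map (· - 1)).length := List.length_filter_le _ _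
      rw [List.length_map] at h1
      exact h1
    have hsum := sum_addCol k s hslen
    have hM := master s hss (k + 2) k k hxs hslen
    have hR : Rr (k + 2) k = Rr k k + 1 := by
      rw [Rr_succ, Rr_succ, if_neg (show ¬ (k + 1) % 3 = k % 3 by omega),
        if_pos (show k % 3 = k % 3 from rfl)]
    have hwq : q.wtt = Fc s (k + 2) k + wttL s := by
      rw [wtt_eq, hq, hrows]
      rw [show wttL ((k + 2) :: s) = Fc s (k + 2) (k + 2 + 1) + wttL s from rfl]
      rw [show k + 2 + 1 = k + 3 from rfl, Fc_mod3]
    have hwp : p.wtt = wttL s + Gc s k k := by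
      rw [wtt_eq, ← hrec, wttL_addCol _ _ hslen]
    have hszq : q.size = k + 2 + s.sum := by
      rw [YDPartition.size, hq, hrows]
      simp
    have hszp : p.size = k + s.sum := by
      rw [YDPartition.size, ← hrec, hsum]
    constructor
    · omega
    · omega

end PartitionAux

namespace PartitionAux
open YDPartition

lemma countP_split (p : ℕ → Bool) : ∀ l : List ℕ,
    l.countP p + l.countP (fun a => !(p a)) = l.length := by
  intro l
  induction l with
  | nil => simp
  | cons a t ih =>
    rw [List.countP_cons, List.countP_cons, List.length_cons]
    cases h : p a <;> simp [h] <;> omega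

lemma map_getD_succ (t : List ℕ) (B : ℕ) :
    (List.range (B + 1)).map (fun i => t.getD i 0)
      = t.getD 0 0 :: (List.range B).map (fun i => t.tail.getD i 0) := by
  rw [List.range_succ_eq_map, List.map_cons, List.map_map]
  congr 1
  apply List.map_congr_left
  intro i _
  simp [Function.comp, getD_tail]

lemma filter_pos_map_getD : ∀ (t : List ℕ) (B : ℕ), (∀ x ∈ t, 0 < x) → t.length ≤ B →
    ((List.range B).map (fun i => t.getD i 0)).filter (fun x => decide (0 < x)) = t := by
  intro t
  induction t with
  | nil =>
    intro B _ _
    rw [List.filter_eq_nil_iff]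
    intro x hx
    rw [List.mem_map] at hx
    obtain ⟨i, _, rfl⟩ := hx
    simp [List.getD]
  | cons a t ih =>
    intro B hp hB
    obtain ⟨B', rfl⟩ : ∃ B', B = B' + 1 := ⟨B - 1, by simp at hB; omega⟩
    rw [map_getD_succ]
    simp only [List.getD_cons_zero, List.tail_cons]
    rw [List.filter_cons, if_pos (by simp [hp a (List.mem_cons_self)])]
    rw [ih B' (fun x hx => hp x (List.mem_cons_of_mem a hx)) (by simp at hB; omega)]

lemma cons_head_tail {l : List ℕ} (h : l ≠ []) : l = l.getD 0 0 :: l.tail := by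
  cases l with
  | nil => exact absurd rfl h
  | cons a t => rfl

lemma s_sorted {l : List ℕ} (hs : l.Pairwise (· ≥ ·)) :
    ((l.map (· - 1)).filter (fun x => decide (0 < x))).Pairwise (· ≥ ·) := by
  apply List.Pairwise.filter
  exact List.Pairwise.map _ (fun a b hab => by omega) hs

lemma s_pos (l : List ℕ) : ∀ x ∈ (l.map (· - 1)).filter (fun x => decide (0 < x)), 0 < x := by
  intro x hx
  have := List.of_mem_filter hx
  simpa using this

lemma s_le {l : List ℕ} (hs : l.Pairwise (· ≥ ·)) :
    ∀ x ∈ (l.map (· - 1)).filter (fun x => decide (0 < x)), x + 1 ≤ l.getD 0 0 := by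
  intro x hx
  have hx2 := List.mem_of_mem_filter hx
  rw [List.mem_map] at hx2
  obtain ⟨y, hy, rfl⟩ := hx2
  have h1 := mem_le_head hs hy
  have h2 := List.of_mem_filter hx
  simp only [decide_eq_true_eq] at h2
  omega

lemma s_len (l : List ℕ) :
    ((l.map (· - 1)).filter (fun x => decide (0 < x))).length ≤ l.length := by
  have h1 := List.length_filter_le (fun x => decide (0 < x)) (l.map (· - 1))
  rw [List.length_map] at h1
  exact h1

end PartitionAux

namespace PartitionAux
open YDPartition

lemma applyWord_append (w : List ℕ) (a : ℕ) :
    YDPartition.applyWord (w ++ [a])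
      = (YDPartition.applyWord w).bind (fun p => YDPartition.step a p) := by
  rw [YDPartition.applyWord, YDPartition.applyWord, List.foldlM_append]
  cases w.foldlM (fun p a => YDPartition.step a p) YDPartition.emptyP with
  | none => rfl
  | some q => simp [List.foldlM_cons]

lemma applyWord_nil : YDPartition.applyWord [] = some YDPartition.emptyP := rfl

lemma exists_word : ∀ (n : ℕ) (p : YDPartition), p.size ≤ n →
    ∃ w : List ℕ, YDPartition.applyWord w = some p := by
  intro n
  induction n with
  | zero =>
    intro p hp
    have hnil : p.rows = [] := by
      rcases List.eq_nil_or_concat p.rows with h | ⟨l, b, h⟩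
      · exact h
      · exfalso
        have hb : 0 < b := p.pos b (by rw [h]; simp)
        have : b ≤ p.rows.sum := by
          rw [h, List.concat_eq_append, List.sum_append]
          simp
        have hs : p.size = p.rows.sum := rfl
        omega
    refine ⟨[], ?_⟩
    rw [applyWord_nil]
    congr 1
    apply partition_ext
    rw [hnil]
    rfl
  | succ n ih =>
    intro p hp
    by_cases hnil : p.rows = []
    · refine ⟨[], ?_⟩
      rw [applyWord_nil]
      congr 1
      apply partition_ext
      rw [hnil]
      rfl
    · have hk1 : 1 ≤ p.rows.length := by
        cases hl : p.rows with
        | nil => exact absurd hl hnil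
        | cons a t => simp
      have hhead := cons_head_tail hnil
      have hjpos : 0 < p.rowLen := by
        apply p.pos
        rw [YDPartition.rowLen, YDPartition.row]
        conv => rw [hhead]
        simp
      have hsum := sum_head_tail p.rows
      have hsz : p.size = p.rows.sum := rfl
      set s := (p.rows.map (· - 1)).filter (fun x => decide (0 < x)) with hsdef
      have hrec : addCol p.rows.length s = p.rows := rows_addCol p.rows p.sorted p.pos
      have hssum := sum_addCol p.rows.length s (s_len p.rows)
      by_cases hcase : p.rowLen ≤ p.rows.length
      -- rho1 case
      · by_cases hone : p.rows.length ≤ 1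
        · -- p = [1], preimage is emptyP
          have hk : p.rows.length = 1 := by omega
          have hrows1 : p.rows = [1] := by
            rw [hhead]
            have : p.rows.tail.length = 0 := by
              rw [List.length_tail, hk]
            rw [List.length_eq_zero_iff.mp this]
            have hj1 : p.rows.getD 0 0 = 1 := by
              have := hcase
              rw [YDPartition.rowLen, YDPartition.row] at hjpos hcase
              omega
            rw [hj1]
          have hstep : YDPartition.rho1? YDPartition.emptyP = some p := by
            have hrr : YDPartition.rho1Rows YDPartition.emptyP = p.rows := by
              rw [hrows1]
              rfl
            rw [YDPartition.rho1?, dif_pos]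
            · congr 1
              apply partition_ext
              exact hrr
            · constructor
              · show YDPartition.emptyP.colHeight ≤ YDPartition.emptyP.rowLen + 2
                decide
              · rw [hrr]
                exact ⟨p.sorted, p.pos⟩
          refine ⟨[1], ?_⟩
          rw [show ([1] : List ℕ) = [] ++ [1] from rfl, applyWord_append, applyWord_nil]
          simp only [Option.bind_some]
          rw [YDPartition.step, if_pos rfl]
          exact hstep
        · -- k ≥ 2
          have hk2 : 2 ≤ p.rows.length := by omega
          have hqsort : ((p.rows.length - 1) :: s).Pairwise (· ≥ ·) := by
            rw [List.pairwise_cons]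
            refine ⟨?_, s_sorted p.sorted⟩
            intro b hb
            have := s_le p.sorted b hb
            rw [YDPartition.rowLen, YDPartition.row] at hcase
            omega
          have hqpos : ∀ x ∈ (p.rows.length - 1) :: s, 0 < x := by
            intro x hx
            rcases List.mem_cons.mp hx with rfl | hx
            · omega
            · exact s_pos p.rows x hx
          set q : YDPartition := ⟨(p.rows.length - 1) :: s, hqsort, hqpos⟩ with hqdef
          have hqrows : YDPartition.rho1Rows q = p.rows := by
            have h1 : q.rowLen = p.rows.length - 1 := rfl
            have h2 : q.rows.tail = s := rfl
            rw [YDPartition.rho1Rows, h1, h2,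
              show p.rows.length - 1 + 1 = p.rows.length by omega]
            exact hrec
          have hstep : YDPartition.rho1? q = some p := by
            rw [YDPartition.rho1?, dif_pos]
            · congr 1
              apply partition_ext
              exact hqrows
            · constructor
              · show q.rows.length ≤ q.rowLen + 2
                have h0 : q.rows.length = 1 + s.length := by
                  simp [hqdef]
                  omega
                have h1 : q.rowLen = p.rows.length - 1 := rfl
                have h2 := s_len p.rows
                rw [← hsdef] at h2
                omega
              · rw [hqrows]
                exact ⟨p.sorted, p.pos⟩
          have hqsize : q.size + 1 = p.size := by
            have : q.size = (p.rows.length - 1) + s.sum := by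
              show ((p.rows.length - 1) :: s).sum = _
              simp
            rw [← hrec] at hsz
            omega
          obtain ⟨w, hw⟩ := ih q (by omega)
          refine ⟨w ++ [1], ?_⟩
          rw [applyWord_append, hw]
          simp only [Option.bind_some]
          rw [YDPartition.step, if_pos rfl]
          exact hstep
      -- psi2 case
      · have hj2 : p.rows.length + 1 ≤ p.rowLen := by omega
        have hq2 : 2 ≤ p.rowLen := by omega
        set q : YDPartition := ⟨addCol (p.rowLen - 2) p.rows.tail,
          addCol_sorted (tail_sorted p.sorted) _,
          addCol_pos _ _⟩ with hqdef
        have htlen : p.rows.tail.length ≤ p.rowLen - 2 := by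
          rw [List.length_tail]
          omega
        have htpos : ∀ x ∈ p.rows.tail, 0 < x :=
          fun x hx => p.pos x (List.mem_of_mem_tail hx)
        have hqrows : YDPartition.psi2Rows q = p.rows := by
          rw [YDPartition.psi2Rows]
          have hch : q.colHeight = p.rowLen - 2 := by
            show (addCol (p.rowLen - 2) p.rows.tail).length = _
            exact length_addCol _ _
          rw [hch, show p.rowLen - 2 + 2 = p.rowLen by omega]
          have hmap : q.rows.map (· - 1)
              = (List.range (p.rowLen - 2)).map (fun i => p.rows.tail.getD i 0) := by
            show (addCol (p.rowLen - 2) p.rows.tail).map (· - 1) = _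
            rw [addCol, List.map_map]
            apply List.map_congr_left
            intro i _
            simp
          rw [hmap, filter_pos_map_getD p.rows.tail (p.rowLen - 2) htpos htlen]
          conv_rhs => rw [hhead]
          rfl
        have hstep : YDPartition.psi2? q = some p := by
          rw [YDPartition.psi2?, dif_pos]
          · congr 1
            apply partition_ext
            exact hqrows
          · rw [hqrows]
            exact ⟨p.sorted, p.pos⟩
        have hqsize : q.size + 2 = p.size := by
          have h1 : q.size = (p.rowLen - 2) + p.rows.tail.sum := by
            show (addCol (p.rowLen - 2) p.rows.tail).sum = _
            exact sum_addCol _ _ htlen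
          have h2 : p.rowLen = p.rows.getD 0 0 := rfl
          omega
        obtain ⟨w, hw⟩ := ih q (by omega)
        refine ⟨w ++ [2], ?_⟩
        rw [applyWord_append, hw]
        simp only [Option.bind_some]
        rw [YDPartition.step, if_neg (by omega)]
        exact hstep

end PartitionAux

namespace PartitionAux
open YDPartition

lemma emptyP_size : YDPartition.emptyP.size = 0 := rfl

lemma emptyP_wtt : YDPartition.emptyP.wtt = 0 := by
  rw [wtt_eq]
  rfl

lemma applyWord_spec : ∀ (w : List ℕ) (p : YDPartition), YDPartition.applyWord w = some p →
    p.size + w.count 1 = 2 * w.length ∧ p.wtt + w.count 1 = w.length := by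
  intro w
  induction w using List.reverseRecOn with
  | nil =>
    intro p hp
    rw [applyWord_nil] at hp
    cases hp
    rw [emptyP_size, emptyP_wtt]
    simp
  | append_singleton w a ih =>
    intro p hp
    rw [applyWord_append] at hp
    cases hw : YDPartition.applyWord w with
    | none => rw [hw] at hp; simp at hp
    | some q =>
      rw [hw, Option.bind_some] at hp
      obtain ⟨h1, h2⟩ := ih q hw
      have hlen : (w ++ [a]).length = w.length + 1 := by simp
      by_cases ha : a = 1
      · subst ha
        rw [YDPartition.step, if_pos rfl] at hp
        obtain ⟨hs, hw2⟩ := rho1_spec hp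
        have hc : (w ++ [1]).count 1 = w.count 1 + 1 := by
          simp
        rw [hc, hlen, hs, hw2]
        omega
      · rw [YDPartition.step, if_neg ha] at hp
        obtain ⟨hs, hw2⟩ := psi2_spec hp
        have hc : (w ++ [a]).count 1 = w.count 1 := by
          have h0 : List.count 1 [a] = 0 := List.count_eq_zero.mpr (by
            simp only [List.mem_singleton]
            omega)
          rw [List.count_append, h0]
          omega
        rw [hc, hlen, hs, hw2]
        omega

lemma foldlM_no_one : ∀ (w : List ℕ), (∀ a ∈ w, a ≠ 1) → ∀ q : YDPartition,
    w.foldlM (fun p a => YDPartition.step a p) q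
      = (List.replicate w.length 2).foldlM (fun p a => YDPartition.step a p) q := by
  intro w
  induction w with
  | nil => intro _ q; rfl
  | cons a w ih =>
    intro h q
    rw [List.length_cons, List.replicate_succ, List.foldlM_cons, List.foldlM_cons]
    have hstep : YDPartition.step a q = YDPartition.step 2 q := by
      rw [YDPartition.step, YDPartition.step, if_neg (h a (List.mem_cons_self)),
        if_neg (by omega)]
    rw [hstep]
    cases hq2 : YDPartition.step 2 q with
    | none => rfl
    | some q' =>
      simp only [Option.bind_eq_bind, Option.bind_some]
      exact ih (fun b hb => h b (List.mem_cons_of_mem a hb)) q'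

end PartitionAux

namespace PartitionAux
open YDPartition

lemma applyWord_no_one (w : List ℕ) (h : ∀ a ∈ w, a ≠ 1) :
    YDPartition.applyWord w = YDPartition.applyWord (List.replicate w.length 2) :=
  foldlM_no_one w h YDPartition.emptyP

lemma chain : ∀ n : ℕ, ∃ p : YDPartition,
    YDPartition.applyWord (List.replicate n 2) = some p ∧
    p.rows.Nodup ∧ p.rowLen ≤ p.rows.length + 2 := by
  intro n
  induction n with
  | zero =>
    refine ⟨YDPartition.emptyP, rfl, by simp [YDPartition.emptyP], ?_⟩
    show YDPartition.emptyP.rowLen ≤ YDPartition.emptyP.rows.length + 2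
    decide
  | succ n ih =>
    obtain ⟨p, hp, hnd, hjk⟩ := ih
    set s := (p.rows.map (· - 1)).filter (fun x => decide (0 < x)) with hsdef
    set k := p.rows.length with hkdef
    have hkch : p.colHeight = k := rfl
    have hsle : ∀ b ∈ s, b + 1 ≤ p.rowLen := by
      intro b hb
      rw [hsdef] at hb
      exact s_le p.sorted b hb
    have hsort : (YDPartition.psi2Rows p).Pairwise (· ≥ ·) := by
      rw [YDPartition.psi2Rows, hkch]
      rw [List.pairwise_cons]
      constructor
      · intro b hb
        rw [← hsdef] at hb
        have := hsle b hb
        omega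
      · rw [← hsdef]
        exact s_sorted p.sorted
    have hpos : ∀ x ∈ YDPartition.psi2Rows p, 0 < x := by
      rw [YDPartition.psi2Rows]
      intro x hx
      rcases List.mem_cons.mp hx with rfl | hx
      · omega
      · rw [← hsdef] at hx
        exact s_pos p.rows x hx
    have hyd : IsYD (YDPartition.psi2Rows p) := ⟨hsort, hpos⟩
    obtain ⟨q, hq, hqrows⟩ : ∃ q : YDPartition, YDPartition.psi2? p = some q ∧
        q.rows = YDPartition.psi2Rows p := by
      rw [YDPartition.psi2?, dif_pos hyd]
      exact ⟨_, rfl, rfl⟩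
    have happ : YDPartition.applyWord (List.replicate (n + 1) 2) = some q := by
      rw [List.replicate_succ', applyWord_append, hp, Option.bind_some,
        YDPartition.step, if_neg (by omega)]
      exact hq
    have hnds : s.Nodup := by
      rw [hsdef]
      apply List.Nodup.filter
      apply List.Nodup.map_on _ hnd
      intro x hx y hy hxy
      have := p.pos x hx
      have := p.pos y hy
      omega
    have hslen : k ≤ s.length + 1 := by
      have e1 : s.length = p.rows.countP (fun y => decide (0 < y - 1)) := by
        rw [hsdef, ← List.countP_eq_length_filter, List.countP_map]
        rfl
      have e2 := countP_split (fun y => decide (0 < y - 1)) p.rows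
      have e3 : p.rows.countP (fun y => !(decide (0 < y - 1))) = p.rows.count 1 := by
        rw [List.count]
        apply List.countP_congr
        intro y hy
        have := p.pos y hy
        simp only [Bool.not_eq_true', decide_eq_false_iff_not, not_lt, beq_iff_eq]
        omega
      have e4 : p.rows.count 1 ≤ 1 := List.nodup_iff_count_le_one.mp hnd 1
      omega
    refine ⟨q, happ, ?_, ?_⟩
    · rw [hqrows, YDPartition.psi2Rows, hkch, List.nodup_cons]
      constructor
      · intro hmem
        rw [← hsdef] at hmem
        have := hsle _ hmem
        omega
      · rw [← hsdef]
        exact hnds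
    · have hr1 : q.rowLen = k + 2 := by
        rw [YDPartition.rowLen, YDPartition.row, hqrows, YDPartition.psi2Rows, hkch]
        rfl
      have hr2 : q.rows.length = 1 + s.length := by
        rw [hqrows, YDPartition.psi2Rows, ← hsdef]
        simp only [List.length_cons]
        omega
      omega

end PartitionAux

open YDPartition in
/-- for `n ≥ 2`, there is exactly one partition of `2n`
with `w̃t = n`. -/
theorem card_top_weight_even (n : ℕ) (hn : 2 ≤ n) :
    {p : YDPartition | p.size = 2 * n ∧ p.wtt = n}.ncard = 1 := by
  obtain ⟨pn, hpn, -, -⟩ := PartitionAux.chain n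
  have hrep_len : (List.replicate n 2).length = n := List.length_replicate
  have hrep_cnt : (List.replicate n 2).count 1 = 0 := by
    apply List.count_eq_zero.mpr
    intro h
    have := List.eq_of_mem_replicate h
    omega
  obtain ⟨h1, h2⟩ := PartitionAux.applyWord_spec _ _ hpn
  rw [hrep_len, hrep_cnt] at h1 h2
  have hset : {p : YDPartition | p.size = 2 * n ∧ p.wtt = n} = {pn} := by
    ext p
    simp only [Set.mem_setOf_eq, Set.mem_singleton_iff]
    constructor
    · rintro ⟨hs, hw⟩
      obtain ⟨w, hww⟩ := PartitionAux.exists_word p.size p le_rfl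
      obtain ⟨g1, g2⟩ := PartitionAux.applyWord_spec w p hww
      have hc0 : w.count 1 = 0 := by omega
      have hlw : w.length = n := by omega
      have hnone : ∀ a ∈ w, a ≠ 1 := by
        intro a ha hcon
        subst hcon
        have hpos : 0 < w.count 1 := List.count_pos_iff.mpr ha
        omega
      rw [PartitionAux.applyWord_no_one w hnone, hlw, hpn] at hww
      exact (Option.some.inj hww).symm
    · rintro rfl
      exact ⟨by omega, by omega⟩
  rw [hset, Set.ncard_singleton]
end
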